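/- arXiv:1504.01445 — 9 statements merged into one kernel-verified Lean document; each statement's English description precedes it below -/
import Mathlib

section
/- Let B and A be metric spaces and f : B → A. Then χ(f) ≤ χ_u(f), where χ(f) = sup_{b∈B} χ(f,b) is the jump of f and χ_u(f) = inf_{δ>0} sup_{b∈B} diam f(B_δ(b)) is the uniform jump of f (B_δ(b) the open δ-ball about b). Moreover, if B is compact, then χ(f) = χ_u(f). -/
/-!
Every `δ`-ball about `b` is an open neighbourhood of `b`, so `χ(f, b) ≤ diam f(B_δ(b))`,
which gives `χ(f) ≤ χ_u(f)`. Conversely, if `χ(f) < c`, every point has an open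
neighbourhood whose image has diameter `< c`. On a compact domain a Lebesgue number `δ`
of this cover puts every `δ`-ball inside one of these neighbourhoods, so `χ_u(f) ≤ c`.
-/

open scoped ENNReal

/-- The jump of `f` at `b`: the infimum, over open neighborhoods `U` of `b`,
of the diameter (in `[0,∞]`) of `f '' U`. -/
noncomputable def jumpAt {B A : Type*} [TopologicalSpace B] [PseudoEMetricSpace A]
    (f : B → A) (b : B) : ℝ≥0∞ :=
  ⨅ (U : Set B) (_ : IsOpen U) (_ : b ∈ U), EMetric.diam (f '' U)

/-- The jump of `f`: the supremum over all points of the jump of `f` there. -/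
noncomputable def jump {B A : Type*} [TopologicalSpace B] [PseudoEMetricSpace A]
    (f : B → A) : ℝ≥0∞ :=
  ⨆ b, jumpAt f b

/-- The uniform jump of `f` between metric spaces:
`inf_{δ>0} sup_{b} diam f(B_δ(b))`. -/
noncomputable def uniformJump {B A : Type*} [PseudoMetricSpace B] [PseudoEMetricSpace A]
    (f : B → A) : ℝ≥0∞ :=
  ⨅ (δ : ℝ) (_ : 0 < δ), ⨆ b, EMetric.diam (f '' Metric.ball b δ)

section Jump

variable {B A : Type*} [PseudoEMetricSpace A]

theorem jumpAt_le_ediam_image [TopologicalSpace B] (f : B → A) {b : B} {U : Set B}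
    (hU : IsOpen U) (hb : b ∈ U) : jumpAt f b ≤ Metric.ediam (f '' U) :=
  iInf₂_le_of_le U hU (iInf_le _ hb)

theorem exists_isOpen_ediam_image_lt_of_jumpAt_lt [TopologicalSpace B] {f : B → A} {b : B}
    {c : ℝ≥0∞} (h : jumpAt f b < c) :
    ∃ U : Set B, IsOpen U ∧ b ∈ U ∧ Metric.ediam (f '' U) < c := by
  simp only [jumpAt, iInf_lt_iff, exists_prop] at h
  exact h

theorem jump_le_uniformJump [PseudoMetricSpace B] (f : B → A) : jump f ≤ uniformJump f :=
  le_iInf₂ fun _ hδ => iSup_le fun b =>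
    (jumpAt_le_ediam_image f Metric.isOpen_ball (Metric.mem_ball_self hδ)).trans
      (le_iSup (fun b' => Metric.ediam (f '' Metric.ball b' _)) b)

theorem uniformJump_le_jump [PseudoMetricSpace B] [CompactSpace B] (f : B → A) :
    uniformJump f ≤ jump f := by
  refine le_of_forall_gt_imp_ge_of_dense fun c hc => ?_
  have hjump : ∀ b, jumpAt f b < c := fun b => (le_iSup (jumpAt f) b).trans_lt hc
  choose U hU_open hU_mem hU_diam using
    fun b => exists_isOpen_ediam_image_lt_of_jumpAt_lt (hjump b)
  obtain ⟨δ, hδ, hball⟩ := lebesgue_number_lemma_of_metric isCompact_univ hU_open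
    (fun b _ => Set.mem_iUnion.2 ⟨b, hU_mem b⟩)
  refine iInf₂_le_of_le δ hδ (iSup_le fun b => ?_)
  obtain ⟨b', hb'⟩ := hball b (Set.mem_univ b)
  exact (Metric.ediam_mono (Set.image_mono hb')).trans (hU_diam b').le

end Jump

/-- The jump is at most the uniform jump; they are equal when the domain is compact. -/
theorem jump_le_uniformJump_and_eq_of_compact {B A : Type*} [MetricSpace B] [MetricSpace A]
    (f : B → A) :
    jump f ≤ uniformJump f ∧ (CompactSpace B → jump f = uniformJump f) :=
  ⟨jump_le_uniformJump f, fun _ => (jump_le_uniformJump f).antisymm (uniformJump_le_jump f)⟩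
end

section
/- If F is a finite subset of S¹ with diameter strictly less than 2/3, then there is an arc of S¹ of length equal to diam(F) that contains F; that is, there exists a real number a such that F is contained in the image of the closed interval [a, a + diam(F)] under the quotient map ℝ → ℝ/2ℤ. -/
noncomputable def circLift (x : AddCircle (2:ℝ)) : ℝ :=
  x.out - 2 * round (x.out / 2)

lemma circLift_coe (x : AddCircle (2:ℝ)) : ((circLift x : ℝ) : AddCircle (2:ℝ)) = x := by
  have h : ((2 * (round (x.out / 2) : ℝ) : ℝ) : AddCircle (2:ℝ)) = 0 := by
    rw [AddCircle.coe_eq_zero_iff]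
    exact ⟨round (x.out / 2), by push_cast [zsmul_eq_mul]; ring⟩
  unfold circLift
  rw [AddCircle.coe_sub, h, sub_zero]
  exact x.out_eq'

lemma circLift_norm (x : AddCircle (2:ℝ)) : |circLift x| = ‖x‖ := by
  have h1 : ‖((x.out : ℝ) : AddCircle (2:ℝ))‖ = |x.out - round (2⁻¹ * x.out) * 2| :=
    AddCircle.norm_eq _
  have h2 : ((x.out : ℝ) : AddCircle (2:ℝ)) = x := x.out_eq'
  conv_rhs => rw [← h2]
  rw [h1]
  unfold circLift
  ring_nf

lemma key (u v : ℝ) (hu : |u| < 2/3) (hv : |v| < 2/3)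
    (h : ‖((u - v : ℝ) : AddCircle (2:ℝ))‖ < 2/3) :
    |u - v| = ‖((u - v : ℝ) : AddCircle (2:ℝ))‖ := by
  have hn : ‖((u - v : ℝ) : AddCircle (2:ℝ))‖ = |(u - v) - round (2⁻¹ * (u - v)) * 2| :=
    AddCircle.norm_eq _
  have hw : |u - v| < 4/3 := by
    calc |u - v| ≤ |u| + |v| := abs_sub _ _
    _ < 4/3 := by linarith
  have hr : round (2⁻¹ * (u - v)) = 0 := by
    have h2 : |(round (2⁻¹ * (u - v)) : ℝ) * 2| < 2 := by
      have h4 := abs_sub_abs_le_abs_sub ((round (2⁻¹ * (u - v)) : ℝ) * 2) (u - v)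
      have h3 : |(round (2⁻¹ * (u - v)) : ℝ) * 2 - (u - v)| =
          |(u - v) - round (2⁻¹ * (u - v)) * 2| := abs_sub_comm _ _
      rw [h3, ← hn] at h4
      linarith
    have h5 : |(round (2⁻¹ * (u - v)) : ℝ)| < 1 := by
      rw [abs_mul] at h2; simp at h2; linarith [h2]
    have h6 : |round (2⁻¹ * (u - v))| < 1 := by
      rwa [← Int.cast_abs, show ((1:ℝ) = ((1:ℤ):ℝ)) by norm_num, Int.cast_lt] at h5
    rw [abs_lt] at h6; omega
  rw [hn, hr]
  norm_num

/-- If a finite subset of the circle `ℝ/2ℤ` (circumference 2, arc-length metric)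
has diameter `< 2/3`, then it lies on an arc whose length equals its diameter. -/
theorem finite_small_diam_subset_of_circle_lies_on_arc
    (F : Finset (AddCircle (2:ℝ)))
    (hF : Metric.diam (F : Set (AddCircle (2:ℝ))) < 2/3) :
    ∃ a : ℝ, (F : Set (AddCircle (2:ℝ))) ⊆
      (fun x : ℝ => (x : AddCircle (2:ℝ))) ''
        Set.Icc a (a + Metric.diam (F : Set (AddCircle (2:ℝ)))) := by
  set D := Metric.diam (F : Set (AddCircle (2:ℝ))) with hD
  rcases F.eq_empty_or_nonempty with rfl | ⟨x₀, hx₀⟩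
  · exact ⟨0, by simp⟩
  have hbd : Bornology.IsBounded (F : Set (AddCircle (2:ℝ))) := F.finite_toSet.isBounded
  have hdist : ∀ y ∈ F, ∀ z ∈ F, dist y z ≤ D := fun y hy z hz =>
    Metric.dist_le_diam_of_mem hbd hy hz
  set f : AddCircle (2:ℝ) → ℝ := fun y => circLift x₀ + circLift (y - x₀) with hf
  have hcoe : ∀ y : AddCircle (2:ℝ), ((f y : ℝ) : AddCircle (2:ℝ)) = y := by
    intro y
    rw [hf]
    simp only [AddCircle.coe_add, circLift_coe]
    abel
  have habs : ∀ y ∈ F, |circLift (y - x₀)| ≤ D := by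
    intro y hy
    rw [circLift_norm, ← dist_eq_norm]
    exact hdist y hy x₀ hx₀
  have hkey : ∀ y ∈ F, ∀ z ∈ F, |f y - f z| ≤ D := by
    intro y hy z hz
    have h1 : f y - f z = circLift (y - x₀) - circLift (z - x₀) := by rw [hf]; ring
    have h2 : ((circLift (y - x₀) - circLift (z - x₀) : ℝ) : AddCircle (2:ℝ)) = y - z := by
      simp only [AddCircle.coe_sub, circLift_coe]; abel
    have h3 : ‖((circLift (y - x₀) - circLift (z - x₀) : ℝ) : AddCircle (2:ℝ))‖ ≤ D := by
      rw [h2, ← dist_eq_norm]; exact hdist y hy z hz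
    rw [h1, key _ _ (lt_of_le_of_lt (habs y hy) hF) (lt_of_le_of_lt (habs z hz) hF)
      (lt_of_le_of_lt h3 hF)]
    exact h3
  have hne : (F.image f).Nonempty := ⟨f x₀, Finset.mem_image_of_mem f hx₀⟩
  refine ⟨(F.image f).min' hne, ?_⟩
  intro y hy
  rw [Finset.mem_coe] at hy
  obtain ⟨z, hz, hzeq⟩ := Finset.mem_image.mp ((F.image f).min'_mem hne)
  refine ⟨f y, ⟨?_, ?_⟩, hcoe y⟩
  · exact Finset.min'_le _ _ (Finset.mem_image_of_mem f hy)
  · have := hkey y hy z hz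
    have h4 := abs_le.mp this
    linarith [h4.1, h4.2, hzeq ▸ (le_refl (f z))]
end

section
/- There exist a binary operation F : S¹ × S¹ → S¹ and elements z, o ∈ S¹ such that F(z,x) = z and F(o,x) = x for all x ∈ S¹, and such that the jump χ(F) is at most 2/3 (the domain S¹ × S¹ carrying the product topology). Hence μ(S¹, {F(0,x)≈0, F(1,x)≈x}) ≤ 2/3. -/
open scoped ENNReal

/-!
Quantise the homotopy `(t, x) ↦ t x` from the constant map to the identity of `ℝ/2ℤ`:
`F(a, x) = k x̃ / 3`, where `x̃ ∈ [0, 2)` lifts `x` and `k = ⌊3‖a‖⌋ ∈ {0, 1, 2, 3}` is `0` at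
`a = 0` and `3` at `a = 1`. Moving `a` changes `k` by at most one, hence the value by at most
`x̃ / 3 < 2/3`; moving `x` across `0` changes `x̃` by `2`, hence the value by `2k/3`, which is
within `2/3` of `0` in `ℝ/2ℤ`. When both happen at once, one of the two lifts is close to `0`,
so the first effect is small. Thus `F` is `2/3`-close to being Lipschitz near every point.
-/

open Set Metric Topology
open scoped NNReal

theorem jumpAt_le_of_forall_nhds {B A : Type*} [TopologicalSpace B] [PseudoEMetricSpace A]
    {f : B → A} {b : B} {c : ℝ≥0∞}
    (h : ∀ ε : ℝ≥0, 0 < ε → ∃ U ∈ 𝓝 b, ∀ p ∈ U, ∀ q ∈ U, edist (f p) (f q) ≤ c + ε) :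
    jumpAt f b ≤ c := by
  refine ENNReal.le_of_forall_pos_le_add fun ε hε _ => ?_
  obtain ⟨U, hU, hfU⟩ := h ε hε
  calc jumpAt f b ≤ ediam (f '' interior U) :=
        iInf₂_le_of_le _ isOpen_interior (iInf_le_of_le (mem_interior_iff_mem_nhds.2 hU) le_rfl)
    _ ≤ c + ε := ediam_image_le_iff.2 fun p hp q hq =>
        hfU p (interior_subset hp) q (interior_subset hq)

theorem jump_le_of_forall_dist_lt {B A : Type*} [PseudoMetricSpace B] [PseudoMetricSpace A]
    {f : B → A} {c : ℝ}
    (hf : ∀ ε > 0, ∃ δ > 0, ∀ p q, dist p q < δ → dist (f p) (f q) ≤ c + ε) :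
    jump f ≤ ENNReal.ofReal c := by
  refine iSup_le fun b => jumpAt_le_of_forall_nhds fun ε hε => ?_
  obtain ⟨δ, hδ, hfδ⟩ := hf ε hε
  refine ⟨ball b (δ / 2), ball_mem_nhds b (half_pos hδ), fun p hp q hq => ?_⟩
  have hpq : dist p q < δ := (dist_triangle_right p q b).trans_lt (by
    linarith [mem_ball.1 hp, mem_ball.1 hq])
  rw [edist_dist, ← ENNReal.ofReal_coe_nnreal]
  exact (ENNReal.ofReal_le_ofReal (hfδ p q hpq)).trans ENNReal.ofReal_add_le

theorem Int.abs_floor_sub_floor_le_one {R : Type*} [Ring R] [LinearOrder R] [IsOrderedRing R]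
    [FloorRing R] {x y : R} (h : |x - y| < 1) : |⌊x⌋ - ⌊y⌋| ≤ 1 := by
  obtain ⟨h₁, h₂⟩ := abs_sub_lt_iff.1 h
  have hxy : ⌊x⌋ ≤ ⌊y⌋ + 1 := by
    rw [← Int.floor_add_one]; exact Int.floor_mono (sub_lt_iff_lt_add'.1 h₁).le
  have hyx : ⌊y⌋ ≤ ⌊x⌋ + 1 := by
    rw [← Int.floor_add_one]; exact Int.floor_mono (sub_lt_iff_lt_add'.1 h₂).le
  exact abs_le.2 ⟨by omega, by omega⟩

theorem AddCircle.norm_coe_le_abs_sub_zsmul {p : ℝ} (x : ℝ) (m : ℤ) :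
    ‖(x : AddCircle p)‖ ≤ |x - m • p| :=
  calc ‖(x : AddCircle p)‖ = ‖((x - m • p : ℝ) : AddCircle p)‖ := by
        rw [coe_sub, coe_zsmul, coe_period, smul_zero, sub_zero]
    _ ≤ |x - m • p| := QuotientAddGroup.norm_mk_le_norm

theorem AddCircle.norm_coe_intCast_mul_div_three_le {p : ℝ} (n : ℤ) :
    ‖((n * p / 3 : ℝ) : AddCircle p)‖ ≤ |p| / 3 := by
  -- `(n + 1) / 3` is the integer nearest to `n / 3`
  have hr : |n - 3 * ((n + 1) / 3)| ≤ 1 := abs_le.2 ⟨by omega, by omega⟩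
  have hr' : |(n : ℝ) - 3 * ((n + 1) / 3 : ℤ)| ≤ 1 := by exact_mod_cast hr
  refine (norm_coe_le_abs_sub_zsmul _ ((n + 1) / 3)).trans ?_
  rw [zsmul_eq_mul, show n * p / 3 - ((n + 1) / 3 : ℤ) * p = (n - 3 * ((n + 1) / 3 : ℤ)) * p / 3
    by ring, abs_div, abs_mul, abs_of_pos (three_pos : (0 : ℝ) < 3)]
  gcongr
  exact mul_le_of_le_one_left (abs_nonneg p) hr'

theorem AddCircle.norm_coe_of_le_half_period {p d : ℝ} (hp : 0 < p) (h₀ : 0 ≤ d) (h : d ≤ p / 2) :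
    ‖(d : AddCircle p)‖ = d := by
  rw [(norm_coe_eq_abs_iff p hp.ne').2 (by rwa [abs_of_pos hp, abs_of_nonneg h₀]),
    abs_of_nonneg h₀]

theorem AddCircle.norm_coe_of_half_period_le {p d : ℝ} (hp : 0 < p) (h : p / 2 ≤ d) (h₁ : d ≤ p) :
    ‖(d : AddCircle p)‖ = p - d := by
  calc ‖(d : AddCircle p)‖ = ‖((p - d : ℝ) : AddCircle p)‖ := by
        rw [coe_sub, coe_period, zero_sub, norm_neg]
    _ = p - d := norm_coe_of_le_half_period hp (by linarith) (by linarith)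

local notation "𝕋" => AddCircle (2 : ℝ)

theorem dist_coe_intCast_mul_div_three_le {s s' : ℤ} {u u' : ℝ} (hs : s ∈ Icc 0 3)
    (hs' : s' ∈ Icc 0 3) (hss' : |s - s'| ≤ 1) (hu : u ∈ Ico 0 2) (hu' : u' ∈ Ico 0 2) :
    dist ((s * u / 3 : ℝ) : 𝕋) ((s' * u' / 3 : ℝ) : 𝕋) ≤ 2 / 3 + 2 * dist (u : 𝕋) (u' : 𝕋) := by
  wlog huu' : u' ≤ u generalizing s s' u u'
  · rw [dist_comm, dist_comm (u : 𝕋)]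
    exact this hs' hs (by rwa [abs_sub_comm]) hu' hu (le_of_not_ge huu')
  obtain ⟨hs0, hs3⟩ := hs
  obtain ⟨hu0, hu2⟩ := hu
  obtain ⟨hu'0, hu'2⟩ := hu'
  have hs0' : (0 : ℝ) ≤ s := by exact_mod_cast hs0
  have hs3' : (s : ℝ) ≤ 3 := by exact_mod_cast hs3
  obtain ⟨hd1, hd2⟩ := abs_le.1 (by exact_mod_cast hss' : |(s : ℝ) - s'| ≤ 1)
  have hdu₁ := mul_le_mul_of_nonneg_right hd1 hu'0
  have hdu₂ := mul_le_mul_of_nonneg_right hd2 hu'0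
  rw [dist_eq_norm, dist_eq_norm, ← AddCircle.coe_sub, ← AddCircle.coe_sub]
  rcases le_or_gt (u - u') 1 with hnear | hwrap
  · rw [AddCircle.norm_coe_of_le_half_period (d := u - u') two_pos (by linarith) (by linarith)]
    refine QuotientAddGroup.norm_mk_le_norm.trans ?_
    rw [Real.norm_eq_abs, abs_le]
    have hsu₁ := mul_nonneg hs0' (sub_nonneg.2 huu')
    have hsu₂ := mul_le_mul_of_nonneg_right hs3' (sub_nonneg.2 huu')
    constructor <;> linarith
  · calc ‖((s * u / 3 - s' * u' / 3 : ℝ) : 𝕋)‖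
        = ‖((s * 2 / 3 : ℝ) : 𝕋) + ((s * (u - u' - 2) / 3 + (s - s') * u' / 3 : ℝ) : 𝕋)‖ := by
          rw [← AddCircle.coe_add]; ring_nf
      _ ≤ 2 / 3 + |s * (u - u' - 2) / 3 + (s - s') * u' / 3| :=
          (norm_add_le _ _).trans (add_le_add
            ((AddCircle.norm_coe_intCast_mul_div_three_le s).trans_eq (by norm_num))
            QuotientAddGroup.norm_mk_le_norm)
      _ ≤ 2 / 3 + 2 * ‖((u - u' : ℝ) : 𝕋)‖ := by
          rw [AddCircle.norm_coe_of_half_period_le (d := u - u') two_pos (by linarith)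
            (by linarith), add_le_add_iff_left, abs_le]
          have hneg : 0 ≤ 2 - (u - u') := by linarith
          have hsu₁ := mul_nonneg hs0' hneg
          have hsu₂ := mul_le_mul_of_nonneg_right hs3' hneg
          constructor <;> linarith

instance : Fact ((0 : ℝ) < 2) := ⟨two_pos⟩

noncomputable def icoRep (x : 𝕋) : ℝ := AddCircle.equivIco 2 0 x

theorem icoRep_mem (x : 𝕋) : icoRep x ∈ Ico (0 : ℝ) 2 := by
  simpa [icoRep] using (AddCircle.equivIco 2 0 x).2

@[simp]
theorem coe_icoRep (x : 𝕋) : (icoRep x : 𝕋) = x :=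
  AddCircle.coe_equivIco

noncomputable def level (a : 𝕋) : ℤ := ⌊3 * ‖a‖⌋

theorem level_mem_Icc (a : 𝕋) : level a ∈ Icc 0 3 := by
  have ha : ‖a‖ ≤ 1 := by simpa using AddCircle.norm_le_half_period 2 (x := a) two_ne_zero
  exact ⟨Int.floor_nonneg.2 (by positivity), Int.floor_le_iff.2 (by push_cast; linarith)⟩

theorem abs_level_sub_level_le {a b : 𝕋} (h : dist a b < 1 / 3) : |level a - level b| ≤ 1 := by
  refine Int.abs_floor_sub_floor_le_one ?_
  rw [← mul_sub, abs_mul, abs_of_pos three_pos]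
  have := (abs_norm_sub_norm_le a b).trans_lt (dist_eq_norm a b ▸ h)
  linarith

@[simp]
theorem level_zero : level 0 = 0 := by simp [level]

theorem level_one : level ((1 : ℝ) : 𝕋) = 3 := by
  have h : ‖((1 : ℝ) : 𝕋)‖ = 1 := by
    rw [(AddCircle.norm_coe_eq_abs_iff 2 two_ne_zero).2] <;> norm_num
  simp [level, h]

noncomputable def zeroOneOp (p : 𝕋 × 𝕋) : 𝕋 := ((level p.1 * icoRep p.2 / 3 : ℝ) : 𝕋)

theorem zeroOneOp_zero_left (x : 𝕋) : zeroOneOp (0, x) = 0 := by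
  simp [zeroOneOp]

theorem zeroOneOp_one_left (x : 𝕋) : zeroOneOp (((1 : ℝ) : 𝕋), x) = x := by
  simp [zeroOneOp, level_one]

theorem dist_zeroOneOp_le {p q : 𝕋 × 𝕋} (h : dist p q < 1 / 3) :
    dist (zeroOneOp p) (zeroOneOp q) ≤ 2 / 3 + 2 * dist p q := by
  have h₁ : dist p.1 q.1 ≤ dist p q := le_max_left _ _
  have h₂ : dist p.2 q.2 ≤ dist p q := le_max_right _ _
  have := dist_coe_intCast_mul_div_three_le (level_mem_Icc p.1) (level_mem_Icc q.1)
    (abs_level_sub_level_le (h₁.trans_lt h)) (icoRep_mem p.2) (icoRep_mem q.2)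
  rw [coe_icoRep, coe_icoRep] at this
  exact this.trans (by linarith)

theorem jump_zeroOneOp_le : jump zeroOneOp ≤ 2 / 3 := by
  have h := jump_le_of_forall_dist_lt (f := zeroOneOp) (c := 2 / 3) fun ε hε =>
    ⟨min (1 / 3) (ε / 2), by positivity, fun p q hpq =>
      (dist_zeroOneOp_le (hpq.trans_le (min_le_left _ _))).trans
        (by linarith [hpq.trans_le (min_le_right _ _)])⟩
  rwa [ENNReal.ofReal_div_of_pos three_pos, ENNReal.ofReal_ofNat, ENNReal.ofReal_ofNat] at h

/-- On the circle of circumference 2 there is a binary operation with a left zero and a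
left one whose jump is at most `2/3`. -/
theorem exists_zero_one_op_on_circle_jump_le :
    ∃ (F : AddCircle (2:ℝ) × AddCircle (2:ℝ) → AddCircle (2:ℝ))
      (z o : AddCircle (2:ℝ)),
      (∀ x, F (z, x) = z) ∧ (∀ x, F (o, x) = x) ∧ jump F ≤ 2/3 :=
  ⟨zeroOneOp, 0, ((1 : ℝ) : AddCircle (2 : ℝ)), zeroOneOp_zero_left, zeroOneOp_one_left,
    jump_zeroOneOp_le⟩
end

section
/- For every binary operation F : S¹ × S¹ → S¹ and all elements z, o ∈ S¹ satisfying F(z,x) = z and F(o,x) = x for all x ∈ S¹, the jump χ(F) is at least 2/3 (the domain S¹ × S¹ carrying the product topology). Hence μ(S¹, {F(0,x)≈0, F(1,x)≈x}) ≥ 2/3, and combined with the upper-bound construction, μ(S¹, {F(0,x)≈0, F(1,x)≈x}) = 2/3. -/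
open scoped ENNReal

/-! If `χ(F) < 2/3`, compactness gives `δ > 0` such that `F` maps `δ`-close points to points
closer than `2/3`, a third of the circumference. Along a loop whose consecutive points are that
close, the signed displacements add up to a discrete winding number, and this number does not
change when the loop is pushed across a grid cell of small image. Pushing the loop `F(z, ·)`,
which is constant, to the loop `F(o, ·)`, which is the identity, would turn winding number `0`
into total displacement `2`. -/

open Set Finset

namespace AddCircle

variable {p : ℝ}

lemma dist_coe_natCast_mul_lt {h δ : ℝ} (hh : |h| < δ) {k k' : ℕ} (hk : k ≤ k' + 1)
    (hk' : k' ≤ k + 1) : dist ((k * h : ℝ) : AddCircle p) ((k' * h : ℝ) : AddCircle p) < δ := by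
  have hkk' : |(k : ℝ) - k'| ≤ 1 := by
    have : (k : ℝ) ≤ k' + 1 := by exact_mod_cast hk
    have : (k' : ℝ) ≤ k + 1 := by exact_mod_cast hk'
    exact abs_le.mpr ⟨by linarith, by linarith⟩
  calc dist ((k * h : ℝ) : AddCircle p) ((k' * h : ℝ) : AddCircle p)
      ≤ ‖k * h - k' * h‖ := by rw [dist_eq_norm, ← coe_sub]; exact QuotientAddGroup.norm_mk_le_norm
    _ = |(k : ℝ) - k'| * |h| := by rw [Real.norm_eq_abs, ← sub_mul, abs_mul]
    _ ≤ 1 * |h| := by gcongr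
    _ < δ := by linarith

variable [hp : Fact (0 < p)]

noncomputable def signedDist (a b : AddCircle p) : ℝ :=
  equivIco p (-(p / 2)) (b - a)

lemma signedDist_mem_Ico (a b : AddCircle p) : signedDist a b ∈ Ico (-(p / 2)) (p / 2) := by
  have h : signedDist a b ∈ Ico (-(p / 2)) (-(p / 2) + p) := (equivIco p (-(p / 2)) (b - a)).2
  rwa [show -(p / 2) + p = p / 2 by ring] at h

@[simp]
lemma coe_signedDist (a b : AddCircle p) : (signedDist a b : AddCircle p) = b - a :=
  coe_equivIco

lemma signedDist_eq_of_mem_Ico {a b : AddCircle p} {r : ℝ} (hr : r ∈ Ico (-(p / 2)) (p / 2))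
    (h : (r : AddCircle p) = b - a) : signedDist a b = r := by
  rw [signedDist, ← h, equivIco_coe_of_mem]
  rwa [show -(p / 2) + p = p / 2 by ring]

@[simp]
lemma signedDist_self (a : AddCircle p) : signedDist a a = 0 :=
  signedDist_eq_of_mem_Ico ⟨by linarith [hp.out], by linarith [hp.out]⟩ (by simp)

lemma abs_signedDist (a b : AddCircle p) : |signedDist a b| = dist a b := by
  have hle : |signedDist a b| ≤ |p| / 2 := by
    obtain ⟨h₁, h₂⟩ := signedDist_mem_Ico a b
    rw [abs_of_pos hp.out, abs_le]
    exact ⟨h₁, h₂.le⟩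
  rw [← (norm_coe_eq_abs_iff p hp.out.ne').mpr hle, coe_signedDist, dist_comm, dist_eq_norm]

lemma signedDist_add_signedDist_add_signedDist {a b c : AddCircle p} (hab : dist a b < p / 3)
    (hbc : dist b c < p / 3) (hca : dist c a < p / 3) :
    signedDist a b + signedDist b c + signedDist c a = 0 := by
  obtain ⟨k, hk⟩ : ∃ k : ℤ, k • p = signedDist a b + signedDist b c + signedDist c a := by
    rw [← coe_eq_zero_iff]
    simp only [coe_add, coe_signedDist]
    abel
  -- three displacements of size `< p / 3` add up to a multiple of `p` of size `< p`
  have hsum : |k • p| < p := by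
    rw [hk]
    calc _ ≤ |signedDist a b| + |signedDist b c| + |signedDist c a| := abs_add_three _ _ _
      _ < p := by simp only [abs_signedDist]; linarith
  rw [zsmul_eq_mul, abs_mul, abs_of_pos hp.out] at hsum
  have hk0 : k = 0 := by
    by_contra hk0
    have : (1 : ℝ) ≤ |(k : ℝ)| := by exact_mod_cast Int.one_le_abs hk0
    nlinarith [hp.out]
  rw [← hk, hk0, zero_smul]

lemma signedDist_add_signedDist_eq {a b c d : AddCircle p} (hab : dist a b < p / 3)
    (hbd : dist b d < p / 3) (hac : dist a c < p / 3) (hcd : dist c d < p / 3)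
    (had : dist a d < p / 3) :
    signedDist a b + signedDist b d = signedDist a c + signedDist c d := by
  have h₁ := signedDist_add_signedDist_add_signedDist hab hbd (dist_comm a d ▸ had)
  have h₂ := signedDist_add_signedDist_add_signedDist hac hcd (dist_comm a d ▸ had)
  linarith

noncomputable def windingSum (n : ℕ) (y : ℕ → AddCircle p) : ℝ :=
  ∑ i ∈ range n, signedDist (y i) (y (i + 1))

@[simp]
lemma windingSum_const (n : ℕ) (c : AddCircle p) : windingSum n (fun _ ↦ c) = 0 := by
  simp [windingSum]

lemma windingSum_coe_natCast_mul {n : ℕ} (hn : 2 < n) :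
    windingSum n (fun i ↦ ((i * (p / n) : ℝ) : AddCircle p)) = p := by
  have hn₀ : (0 : ℝ) < n := by positivity
  have hstep : ∀ i : ℕ,
      signedDist ((i * (p / n) : ℝ) : AddCircle p) (((i + 1 : ℕ) * (p / n) : ℝ)) = p / n := by
    intro i
    refine signedDist_eq_of_mem_Ico ⟨by linarith [div_pos hp.out hn₀, hp.out], ?_⟩ ?_
    · rw [div_lt_div_iff_of_pos_left hp.out hn₀ two_pos]
      exact_mod_cast hn
    · rw [← coe_sub]; push_cast; ring_nf
  simp only [windingSum, hstep, sum_const, card_range, nsmul_eq_mul]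
  field_simp

lemma windingSum_eq_of_forall_dist_lt {n : ℕ} {y y' : ℕ → AddCircle p} (hy : y n = y 0)
    (hy' : y' n = y' 0)
    (hcell : ∀ i, dist (y i) (y (i + 1)) < p / 3 ∧ dist (y (i + 1)) (y' (i + 1)) < p / 3 ∧
      dist (y i) (y' i) < p / 3 ∧ dist (y' i) (y' (i + 1)) < p / 3 ∧
      dist (y i) (y' (i + 1)) < p / 3) :
    windingSum n y = windingSum n y' := by
  set g : ℕ → ℝ := fun i ↦ signedDist (y i) (y' i)
  have hcell_eq : ∀ i, signedDist (y i) (y (i + 1)) =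
      (g i - g (i + 1)) + signedDist (y' i) (y' (i + 1)) := by
    intro i
    obtain ⟨h₁, h₂, h₃, h₄, h₅⟩ := hcell i
    have := signedDist_add_signedDist_eq h₁ h₂ h₃ h₄ h₅
    simp only [g]
    linarith
  have hg : g n = g 0 := by simp only [g, hy, hy']
  simp only [windingSum, hcell_eq, sum_add_distrib, sum_range_sub', hg, sub_self, zero_add]

lemma windingSum_eq_of_grid {n : ℕ} {G : ℕ → ℕ → AddCircle p}
    (hloop : ∀ k, G k n = G k 0)
    (hG : ∀ k k' i i', k ≤ k' + 1 → k' ≤ k + 1 → i ≤ i' + 1 → i' ≤ i + 1 →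
      dist (G k i) (G k' i') < p / 3) (k : ℕ) :
    windingSum n (G k) = windingSum n (G 0) := by
  induction k with
  | zero => rfl
  | succ k ih =>
    rw [← ih]
    refine (windingSum_eq_of_forall_dist_lt (hloop k) (hloop (k + 1)) fun i ↦ ?_).symm
    refine ⟨hG _ _ _ _ ?_ ?_ ?_ ?_, hG _ _ _ _ ?_ ?_ ?_ ?_, hG _ _ _ _ ?_ ?_ ?_ ?_,
      hG _ _ _ _ ?_ ?_ ?_ ?_, hG _ _ _ _ ?_ ?_ ?_ ?_⟩ <;> omega

end AddCircle

lemma exists_nat_gt_abs_div_lt (a : ℝ) (N : ℕ) {δ : ℝ} (hδ : 0 < δ) :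
    ∃ n : ℕ, N < n ∧ |a / n| < δ := by
  have h := (tendsto_const_div_atTop_nhds_zero_nat a).eventually (Metric.ball_mem_nhds 0 hδ)
  obtain ⟨n, hn, hδn⟩ := ((Filter.eventually_gt_atTop N).and h).exists
  exact ⟨n, hn, Real.dist_0_eq_abs _ ▸ hδn⟩

section Jump

variable {B A : Type*} [PseudoEMetricSpace A] {f : B → A} {c : ℝ≥0∞}

lemma jumpAt_lt_iff [TopologicalSpace B] {b : B} :
    jumpAt f b < c ↔ ∃ U, IsOpen U ∧ b ∈ U ∧ Metric.ediam (f '' U) < c := by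
  simp only [jumpAt, iInf_lt_iff, exists_prop]
  rfl

lemma exists_pos_forall_edist_lt_of_jump_lt [PseudoMetricSpace B] [CompactSpace B]
    (h : jump f < c) : ∃ δ > 0, ∀ x y, dist x y < δ → edist (f x) (f y) < c := by
  choose U hUo hbU hU using fun b ↦ jumpAt_lt_iff.mp ((le_iSup (jumpAt f) b).trans_lt h)
  obtain ⟨δ, hδ, hball⟩ := lebesgue_number_lemma_of_metric isCompact_univ hUo
    fun b _ ↦ mem_iUnion.2 ⟨b, hbU b⟩
  refine ⟨δ, hδ, fun x y hxy ↦ ?_⟩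
  obtain ⟨b, hb⟩ := hball x (mem_univ x)
  have hx : x ∈ U b := hb (Metric.mem_ball_self hδ)
  have hy : y ∈ U b := hb (Metric.mem_ball'.2 hxy)
  exact (Metric.edist_le_ediam_of_mem (mem_image_of_mem f hx) (mem_image_of_mem f hy)).trans_lt
    (hU b)

end Jump

/-- Every binary operation on the circle of circumference 2 having a left zero and a
left one has jump at least `2/3`. -/
theorem jump_ge_of_zero_one_op_on_circle
    (F : AddCircle (2:ℝ) × AddCircle (2:ℝ) → AddCircle (2:ℝ))
    (z o : AddCircle (2:ℝ))
    (hz : ∀ x, F (z, x) = z) (ho : ∀ x, F (o, x) = x) :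
    2/3 ≤ jump F := by
  have : Fact ((0:ℝ) < 2) := ⟨two_pos⟩
  by_contra! hF
  obtain ⟨δ, hδ, hFδ⟩ := exists_pos_forall_edist_lt_of_jump_lt hF
  obtain ⟨d, hd⟩ := QuotientAddGroup.mk_surjective (o - z)
  obtain ⟨n, hn₂, hx⟩ := exists_nat_gt_abs_div_lt 2 2 hδ
  obtain ⟨m, hm₀, ht⟩ := exists_nat_gt_abs_div_lt d 0 hδ
  have hn : (n : ℝ) ≠ 0 := Nat.cast_ne_zero.2 (by omega)
  have hm : (m : ℝ) ≠ 0 := Nat.cast_ne_zero.2 (by omega)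
  set G : ℕ → ℕ → AddCircle (2 : ℝ) := fun k i ↦
    F (z + ((k * (d / m) : ℝ) : AddCircle (2 : ℝ)), ((i * (2 / n) : ℝ) : AddCircle (2 : ℝ)))
  have hG : ∀ k k' i i', k ≤ k' + 1 → k' ≤ k + 1 → i ≤ i' + 1 → i' ≤ i + 1 →
      dist (G k i) (G k' i') < 2 / 3 := by
    intro k k' i i' hk hk' hi hi'
    rw [← edist_lt_ofReal, ENNReal.ofReal_div_of_pos three_pos]
    refine (hFδ _ _ ?_).trans_le (by norm_num)
    rw [Prod.dist_eq, dist_add_left]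
    exact max_lt (AddCircle.dist_coe_natCast_mul_lt ht hk hk')
      (AddCircle.dist_coe_natCast_mul_lt hx hi hi')
  have hloop : ∀ k, G k n = G k 0 := fun k ↦ by
    simp only [G, mul_div_cancel₀ _ hn, AddCircle.coe_period, Nat.cast_zero, zero_mul,
      AddCircle.coe_zero]
  have hG₀ : G 0 = fun _ ↦ z := funext fun i ↦ by
    simp only [G, Nat.cast_zero, zero_mul, AddCircle.coe_zero, add_zero, hz]
  have hGm : G m = fun i : ℕ ↦ ((i * (2 / n) : ℝ) : AddCircle (2 : ℝ)) := funext fun i ↦ by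
    simp only [G, mul_div_cancel₀ _ hm, hd, add_sub_cancel, ho]
  have := AddCircle.windingSum_eq_of_grid hloop hG m
  rw [hGm, hG₀, AddCircle.windingSum_const, AddCircle.windingSum_coe_natCast_mul hn₂] at this
  exact two_ne_zero this
end

section
/- Every binary operation F : S¹ × S¹ → S¹ satisfying F(x,y) = F(y,x) and F(x,x) = x for all x, y ∈ S¹ has jump χ(F) at least 2/3 (the domain S¹ × S¹ carrying the product topology). Hence μ(S¹, {commutativity, idempotence}) ≥ 2/3, and combined with the upper-bound construction, μ(S¹, {commutativity, idempotence}) = 2/3. -/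
open scoped ENNReal

local instance : Fact ((0:ℝ) < 2) := ⟨two_pos⟩

lemma norm_coe_of_abs_lt {r : ℝ} (h : |r| < 1) : ‖(r : AddCircle (2:ℝ))‖ = |r| := by
  rw [AddCircle.norm_eq]
  have hr : round (2⁻¹ * r) = 0 := by
    rw [round_eq]
    rw [abs_lt] at h
    simp [Int.floor_eq_zero_iff, Set.mem_Ico]
    constructor <;> linarith
  simp [hr]

lemma exists_rep (z : AddCircle (2:ℝ)) :
    ∃ r : ℝ, ((r : ℝ) : AddCircle (2:ℝ)) = z ∧ |r| = ‖z‖ ∧ |r| ≤ 1 := by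
  obtain ⟨x, rfl⟩ := QuotientAddGroup.mk_surjective z
  refine ⟨x - round (2⁻¹ * x) * 2, ?_, ?_, ?_⟩
  · have : ((round (2⁻¹ * x) * 2 : ℝ) : AddCircle (2:ℝ)) = 0 := by
      rw [AddCircle.coe_eq_zero_iff]
      exact ⟨round (2⁻¹ * x), by rw [zsmul_eq_mul]⟩
    rw [AddCircle.coe_sub, this, sub_zero]
  · rw [AddCircle.norm_eq]
  · have h := abs_sub_round (2⁻¹ * x)
    have h2 : x - round (2⁻¹ * x) * 2 = 2 * (2⁻¹ * x - round (2⁻¹ * x)) := by ring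
    rw [h2, abs_mul, abs_of_pos (by norm_num : (0:ℝ) < 2)]
    linarith

/-- The canonical small lift of `b - a`. -/
noncomputable def lft (a b : AddCircle (2:ℝ)) : ℝ := Classical.choose (exists_rep (b - a))

lemma lft_coe (a b : AddCircle (2:ℝ)) : ((lft a b : ℝ) : AddCircle (2:ℝ)) = b - a :=
  (Classical.choose_spec (exists_rep (b - a))).1

lemma lft_abs (a b : AddCircle (2:ℝ)) : |lft a b| = ‖b - a‖ :=
  (Classical.choose_spec (exists_rep (b - a))).2.1

lemma lft_le_one (a b : AddCircle (2:ℝ)) : |lft a b| ≤ 1 :=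
  (Classical.choose_spec (exists_rep (b - a))).2.2

lemma coe_inj_of_close {r s : ℝ} (h : ((r : ℝ) : AddCircle (2:ℝ)) = (s : AddCircle (2:ℝ)))
    (h2 : |r - s| < 2) : r = s := by
  have h0 : ((r - s : ℝ) : AddCircle (2:ℝ)) = 0 := by
    rw [AddCircle.coe_sub, h, sub_self]
  rw [AddCircle.coe_eq_zero_iff] at h0
  obtain ⟨n, hn⟩ := h0
  rw [zsmul_eq_mul] at hn
  have hn1 : |(n:ℝ)| < 1 := by
    have h2' : |(n:ℝ) * 2| < 2 := by rw [hn]; exact h2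
    rw [abs_mul, abs_two] at h2'
    linarith
  rw [abs_lt] at hn1
  have hl : -1 < n := by exact_mod_cast hn1.1
  have hu : n < 1 := by exact_mod_cast hn1.2
  have hn0 : n = 0 := by omega
  subst hn0
  simp at hn
  linarith [hn, abs_nonneg (r - s)]

lemma lft_add {a b c : AddCircle (2:ℝ)} (h1 : ‖b - a‖ < 2/3) (h2 : ‖c - b‖ < 2/3)
    (h3 : ‖c - a‖ < 2/3) : lft a b + lft b c = lft a c := by
  apply coe_inj_of_close
  · rw [AddCircle.coe_add, lft_coe, lft_coe, lft_coe]
    abel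
  · have e1 := lft_abs a b
    have e2 := lft_abs b c
    have e3 := lft_abs a c
    have k1 := abs_add_le (lft a b) (lft b c)
    have k2 := abs_add_le (lft a b + lft b c) (-(lft a c))
    rw [abs_neg] at k2
    rw [sub_eq_add_neg]
    calc |lft a b + lft b c + -lft a c| ≤ |lft a b + lft b c| + |lft a c| := k2
      _ ≤ |lft a b| + |lft b c| + |lft a c| := by linarith
      _ < 2 := by rw [e1, e2, e3]; linarith

lemma lft_eq {a b : AddCircle (2:ℝ)} {r : ℝ} (h : b - a = (r : AddCircle (2:ℝ)))
    (hr : |r| < 1) : lft a b = r := by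
  apply coe_inj_of_close
  · rw [lft_coe, h]
  · have := lft_le_one a b
    calc |lft a b - r| ≤ |lft a b| + |r| := abs_sub _ _
      _ < 2 := by linarith

/-- Every commutative idempotent binary operation on the circle of circumference 2
has jump at least `2/3`. -/
theorem jump_ge_of_comm_idem_op_on_circle
    (F : AddCircle (2:ℝ) × AddCircle (2:ℝ) → AddCircle (2:ℝ))
    (hcomm : ∀ x y, F (x, y) = F (y, x)) (hidem : ∀ x, F (x, x) = x) :
    2/3 ≤ jump F := by
  by_contra hcon
  rw [not_le] at hcon
  -- Step 1: small neighborhoods everywhere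
  have hub : ∀ p : AddCircle (2:ℝ) × AddCircle (2:ℝ),
      ∃ U : Set (AddCircle (2:ℝ) × AddCircle (2:ℝ)),
        IsOpen U ∧ p ∈ U ∧ EMetric.diam (F '' U) < 2/3 := by
    intro p
    have h1 : jumpAt F p < 2/3 := lt_of_le_of_lt (le_iSup (jumpAt F) p) hcon
    simp only [jumpAt, iInf_lt_iff] at h1
    obtain ⟨U, hU, hp, hd⟩ := h1
    exact ⟨U, hU, hp, hd⟩
  choose U hUo hUp hUd using hub
  obtain ⟨δ, hδ, hLeb⟩ := lebesgue_number_lemma_of_metric isCompact_univ hUo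
    (fun q _ => Set.mem_iUnion.2 ⟨q, hUp q⟩)
  -- Step 2: uniform statement
  have key : ∀ p q : AddCircle (2:ℝ) × AddCircle (2:ℝ), dist p q < δ → ‖F p - F q‖ < 2/3 := by
    intro p q hpq
    obtain ⟨i, hi⟩ := hLeb p (Set.mem_univ p)
    have hpU : p ∈ U i := hi (Metric.mem_ball_self hδ)
    have hqU : q ∈ U i := hi (by rwa [Metric.mem_ball, dist_comm])
    have hd : edist (F p) (F q) ≤ EMetric.diam (F '' U i) :=
      EMetric.edist_le_diam_of_mem (Set.mem_image_of_mem F hpU) (Set.mem_image_of_mem F hqU)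
    have h2 : edist (F p) (F q) < 2/3 := lt_of_le_of_lt hd (hUd i)
    have h3 : (2/3 : ℝ≥0∞) = ENNReal.ofReal (2/3 : ℝ) := by
      rw [ENNReal.ofReal_div_of_pos (by norm_num : (0:ℝ) < 3)]
      norm_num
    rw [h3, edist_lt_ofReal, dist_eq_norm] at h2
    exact h2
  -- Step 3: choose a fine grid
  obtain ⟨N0, hN0⟩ := exists_nat_gt (2/δ)
  set N : ℕ := N0 + 3 with hNdef
  have hNpos : (0:ℝ) < (N:ℝ) := by positivity
  have hNne : (N:ℝ) ≠ 0 := ne_of_gt hNpos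
  have hN3 : (3:ℝ) ≤ (N:ℝ) := by exact_mod_cast Nat.le_add_left 3 N0
  have hNgt : 2/δ < (N:ℝ) := lt_of_lt_of_le hN0 (by exact_mod_cast Nat.le_add_right N0 3)
  have hNδ : 2/(N:ℝ) < δ := by
    rw [div_lt_iff₀ hNpos]
    have := (div_lt_iff₀ hδ).mp hNgt
    linarith
  have habs : |(2 / (N:ℝ))| < 1 := by
    rw [abs_of_pos (by positivity)]
    rw [div_lt_one hNpos]
    linarith
  set x : ℕ → AddCircle (2:ℝ) := fun i => ((2 * i / N : ℝ) : AddCircle (2:ℝ)) with hx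
  set g : ℕ → ℕ → AddCircle (2:ℝ) := fun i j => F (x i, x j) with hg
  have hxstep : ∀ i : ℕ, x (i+1) - x i = ((2 / N : ℝ) : AddCircle (2:ℝ)) := by
    intro i
    simp only [hx]
    rw [← AddCircle.coe_sub]
    congr 1
    push_cast
    field_simp
    ring
  have hxd : ∀ i : ℕ, dist (x (i+1)) (x i) < δ := by
    intro i
    rw [dist_eq_norm, hxstep i, norm_coe_of_abs_lt habs, abs_of_pos (by positivity)]
    exact hNδ
  have hxd' : ∀ i : ℕ, dist (x i) (x (i+1)) < δ := fun i => by rw [dist_comm]; exact hxd i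
  have hxd0 : ∀ i : ℕ, dist (x i) (x i) < δ := fun i => by rw [dist_self]; exact hδ
  have hF : ∀ i j k l : ℕ, dist (x i) (x k) < δ → dist (x j) (x l) < δ →
      ‖g i j - g k l‖ < 2/3 := by
    intro i j k l h1 h2
    apply key
    rw [Prod.dist_eq]
    exact max_lt h1 h2
  set e : ℕ → ℕ → ℝ := fun i j => lft (g i j) (g (i+1) j) with he
  set f : ℕ → ℕ → ℝ := fun i j => lft (g i j) (g i (j+1)) with hf
  -- two triangle identities
  have htriL : ∀ i j : ℕ, e i j + f (i+1) j = lft (g i j) (g (i+1) (j+1)) := by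
    intro i j
    exact lft_add (hF (i+1) j i j (hxd i) (hxd0 j)) (hF (i+1) (j+1) (i+1) j (hxd0 (i+1)) (hxd j))
      (hF (i+1) (j+1) i j (hxd i) (hxd j))
  have htriU : ∀ i j : ℕ, f i j + e i (j+1) = lft (g i j) (g (i+1) (j+1)) := by
    intro i j
    exact lft_add (hF i (j+1) i j (hxd0 i) (hxd j)) (hF (i+1) (j+1) i (j+1) (hxd i) (hxd0 (j+1)))
      (hF (i+1) (j+1) i j (hxd i) (hxd j))
  -- main homotopy-style induction
  have main : ∀ k : ℕ, (∑ j ∈ Finset.range k, lft (g j j) (g (j+1) (j+1)))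
      = (∑ j ∈ Finset.range k, f k j) + (∑ i ∈ Finset.range k, e i 0) := by
    intro k
    induction k with
    | zero => simp
    | succ k ih =>
      have hsq : ∀ j : ℕ, f (k+1) j = f k j + (e k (j+1) - e k j) := by
        intro j
        have h1 := htriL k j
        have h2 := htriU k j
        linarith
      have hVstep : (∑ j ∈ Finset.range (k+1), f (k+1) j)
          = (∑ j ∈ Finset.range k, f k j) + (e k k - e k 0) + f (k+1) k := by
        rw [Finset.sum_range_succ]
        have hcong : ∑ j ∈ Finset.range k, f (k+1) j
            = ∑ j ∈ Finset.range k, (f k j + (e k (j+1) - e k j)) :=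
          Finset.sum_congr rfl (fun j _ => hsq j)
        rw [hcong, Finset.sum_add_distrib, Finset.sum_range_sub (fun j => e k j)]
        try ring
      rw [Finset.sum_range_succ, ih, ← htriL k k, hVstep, Finset.sum_range_succ]
      ring
  -- endgame
  have hxN : x N = x 0 := by
    simp only [hx]
    have h1 : (2 * (N:ℝ) / N : ℝ) = 2 := by field_simp
    have h2 : (2 * ((0:ℕ):ℝ) / N : ℝ) = 0 := by norm_num
    rw [h1, h2]
    have := AddCircle.coe_period (p := (2:ℝ))
    simpa using this
  have hgN : ∀ j : ℕ, g N j = g j 0 := by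
    intro j
    simp only [hg]
    rw [hxN, hcomm]
  have hTN : (∑ j ∈ Finset.range N, lft (g j j) (g (j+1) (j+1))) = 2 := by
    have hterm : ∀ j : ℕ, lft (g j j) (g (j+1) (j+1)) = 2 / N := by
      intro j
      have : g j j = x j := hidem (x j)
      have h' : g (j+1) (j+1) = x (j+1) := hidem (x (j+1))
      rw [this, h']
      exact lft_eq (hxstep j) habs
    rw [Finset.sum_congr rfl (fun j _ => hterm j), Finset.sum_const, Finset.card_range,
      nsmul_eq_mul]
    field_simp
  have hVH : (∑ j ∈ Finset.range N, f N j) = (∑ i ∈ Finset.range N, e i 0) := by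
    apply Finset.sum_congr rfl
    intro j _
    simp only [hf, he]
    rw [hgN j, hgN (j+1)]
  have hHcoe : ∀ k : ℕ, (((∑ i ∈ Finset.range k, e i 0 : ℝ)) : AddCircle (2:ℝ))
      = g k 0 - g 0 0 := by
    intro k
    induction k with
    | zero => simp
    | succ k ih =>
      rw [Finset.sum_range_succ, AddCircle.coe_add, ih]
      simp only [he]
      rw [lft_coe]
      abel
  have hH0 : (((∑ i ∈ Finset.range N, e i 0 : ℝ)) : AddCircle (2:ℝ)) = 0 := by
    rw [hHcoe N, hgN 0, sub_self]
  rw [AddCircle.coe_eq_zero_iff] at hH0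
  obtain ⟨m, hm⟩ := hH0
  rw [zsmul_eq_mul] at hm
  have hfinal := main N
  rw [hTN, hVH, ← hm] at hfinal
  have : (2:ℝ) = 4 * (m:ℝ) := by linarith
  have h4 : (4 * m : ℤ) = 2 := by exact_mod_cast this.symm
  omega
end

section
/- Every ternary operation F : S¹ × S¹ × S¹ → S¹ satisfying the majority laws F(x,x,z) = F(x,z,x) = F(z,x,x) = x for all x, z ∈ S¹ has jump χ(F) at least 2/3 (the domain (S¹)³ carrying the product topology). Hence μ(S¹, Σ) ≥ 2/3 where Σ is the majority theory, and combined with the upper-bound construction, μ(S¹,Σ) = μ(S¹,Σ') = 2/3 for both the majority and symmetric majority theories. -/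
open scoped ENNReal

instance MajTest.fact_two_pos : Fact ((0:ℝ) < 2) := ⟨by norm_num⟩

namespace MajTest

noncomputable def L (q : AddCircle (2:ℝ)) : ℝ := (AddCircle.equivIoc 2 (-1) q : ℝ)

lemma L_coe (q : AddCircle (2:ℝ)) : ((L q : ℝ) : AddCircle (2:ℝ)) = q :=
  (AddCircle.equivIoc 2 (-1)).symm_apply_apply q

lemma L_mem (q : AddCircle (2:ℝ)) : -1 < L q ∧ L q ≤ 1 := by
  have h := (AddCircle.equivIoc 2 (-1) q).2
  norm_num at h
  exact h

lemma L_eq {q : AddCircle (2:ℝ)} {r : ℝ} (hr : (r : AddCircle (2:ℝ)) = q)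
    (hr1 : -1 < r) (hr2 : r ≤ 1) : L q = r := by
  have h0 : ((L q - r : ℝ) : AddCircle (2:ℝ)) = 0 := by
    rw [QuotientAddGroup.mk_sub, L_coe, hr, sub_self]
  obtain ⟨k, hk⟩ := (AddCircle.coe_eq_zero_iff (2:ℝ)).mp h0
  have hm := L_mem q
  have hk2 : |(k:ℝ) * 2| < 2 := by
    rw [zsmul_eq_mul] at hk
    rw [hk]
    rw [abs_lt]; constructor <;> linarith
  have : k = 0 := by
    by_contra hne
    have : (1:ℝ) ≤ |(k:ℝ)| := by
      exact_mod_cast Int.one_le_abs (by exact_mod_cast hne)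
    rw [abs_mul] at hk2
    norm_num at hk2
    linarith
  rw [this] at hk
  simp at hk
  linarith [hk]

lemma norm_coe_le (x : ℝ) : ‖(x : AddCircle (2:ℝ))‖ ≤ |x| := by
  rw [AddCircle.norm_eq' (2:ℝ) (by norm_num)]
  have h := round_le ((2:ℝ)⁻¹ * x) 0
  simp only [Int.cast_zero, sub_zero] at h
  calc 2 * |2⁻¹ * x - round (2⁻¹ * x)| ≤ 2 * |2⁻¹ * x| := by linarith [abs_nonneg (2⁻¹ * x - round ((2:ℝ)⁻¹ * x))]
    _ = |x| := by rw [abs_mul, abs_of_nonneg (by norm_num : (0:ℝ) ≤ 2⁻¹)]; ring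

lemma abs_L_lt {q : AddCircle (2:ℝ)} (h : ‖q‖ < 2/3) : |L q| < 2/3 := by
  obtain ⟨x, rfl⟩ := Quotient.exists_rep q
  have hx : (x : AddCircle (2:ℝ)) = Quotient.mk _ x := rfl
  rw [← hx] at h ⊢
  rw [AddCircle.norm_eq] at h
  set r := x - round ((2:ℝ)⁻¹ * x) * 2 with hr
  clear_value r
  have hcoe : (r : AddCircle (2:ℝ)) = (x : AddCircle (2:ℝ)) := by
    rw [hr, QuotientAddGroup.mk_sub]
    have : ((round ((2:ℝ)⁻¹ * x) * 2 : ℝ) : AddCircle (2:ℝ)) = 0 := by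
      rw [AddCircle.coe_eq_zero_iff]
      exact ⟨round ((2:ℝ)⁻¹ * x), by rw [zsmul_eq_mul]⟩
    rw [this, sub_zero]
  have habs : |r| < 2/3 := h
  obtain ⟨hl, hu⟩ := abs_lt.mp habs
  have := L_eq hcoe (by linarith) (by linarith)
  rw [this]; exact habs

lemma L_zero : L (0 : AddCircle (2:ℝ)) = 0 :=
  L_eq (by norm_num) (by norm_num) (by norm_num)

lemma tri {a b c : AddCircle (2:ℝ)} (ha : ‖a‖ < 2/3) (hb : ‖b‖ < 2/3) (hc : ‖c‖ < 2/3)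
    (habc : a + b + c = 0) : L a + L b + L c = 0 := by
  have h0 : ((L a + L b + L c : ℝ) : AddCircle (2:ℝ)) = 0 := by
    rw [QuotientAddGroup.mk_add, QuotientAddGroup.mk_add, L_coe, L_coe, L_coe, habc]
  obtain ⟨k, hk⟩ := (AddCircle.coe_eq_zero_iff (2:ℝ)).mp h0
  have h2 : |L a + L b + L c| < 2 := by
    have := abs_L_lt ha; have := abs_L_lt hb; have := abs_L_lt hc
    have := abs_add_le (L a + L b) (L c)
    have := abs_add_le (L a) (L b)
    linarith
  rw [zsmul_eq_mul] at hk
  have : k = 0 := by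
    by_contra hne
    have h1 : (1:ℝ) ≤ |(k:ℝ)| := by exact_mod_cast Int.one_le_abs (by exact_mod_cast hne)
    rw [← hk, abs_mul] at h2
    norm_num at h2
    linarith
  rw [this] at hk; norm_num at hk; linarith

lemma L_neg {a : AddCircle (2:ℝ)} (ha : ‖a‖ < 2/3) : L (-a) = - L a := by
  have h := tri (a := a) (b := -a) (c := 0) ha (by rwa [norm_neg])
    (by rw [norm_zero]; norm_num) (by abel)
  rw [L_zero] at h; linarith

lemma L_add {x y z : AddCircle (2:ℝ)} (h1 : ‖y - x‖ < 2/3) (h2 : ‖z - y‖ < 2/3)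
    (h3 : ‖z - x‖ < 2/3) : L (y - x) + L (z - y) = L (z - x) := by
  have h := tri (a := y - x) (b := z - y) (c := x - z) h1 h2
    (by rw [← neg_sub z x]; rwa [norm_neg]) (by abel)
  have hn : L (x - z) = - L (z - x) := by rw [← neg_sub z x]; exact L_neg h3
  rw [hn] at h; linarith

lemma core (a : ℕ → ℕ → AddCircle (2:ℝ)) (n : ℕ) (hn2 : 2 ≤ n)
    (hd : ∀ i j i' j' : ℕ, i ≤ i' → i' ≤ i + 1 → j ≤ j' → j' ≤ j + 1 →
      ‖a i' j' - a i j‖ < 2/3)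
    (h0 : ∀ k, a k 0 = 0)
    (htop : ∀ j, a n j = 0)
    (hdiag : ∀ k, a k k = ((2 * k / n : ℝ) : AddCircle (2:ℝ))) : False := by
  have hstrip : ∀ i j : ℕ,
      L (a (i+1) 0 - a i 0) + (∑ k ∈ Finset.range j, L (a (i+1) (k+1) - a (i+1) k))
      = (∑ k ∈ Finset.range j, L (a i (k+1) - a i k)) + L (a (i+1) j - a i j) := by
    intro i j
    induction j with
    | zero => simp
    | succ j ih =>
      rw [Finset.sum_range_succ, Finset.sum_range_succ]
      have key1 : L (a (i+1) j - a i j) + L (a (i+1) (j+1) - a (i+1) j)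
          = L (a (i+1) (j+1) - a i j) :=
        L_add (hd i j (i+1) j (by omega) (by omega) (by omega) (by omega))
          (hd (i+1) j (i+1) (j+1) (by omega) (by omega) (by omega) (by omega))
          (hd i j (i+1) (j+1) (by omega) (by omega) (by omega) (by omega))
      have key2 : L (a i (j+1) - a i j) + L (a (i+1) (j+1) - a i (j+1))
          = L (a (i+1) (j+1) - a i j) :=
        L_add (hd i j i (j+1) (by omega) (by omega) (by omega) (by omega))
          (hd i (j+1) (i+1) (j+1) (by omega) (by omega) (by omega) (by omega))
          (hd i j (i+1) (j+1) (by omega) (by omega) (by omega) (by omega))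
      linarith
  have hmain : ∀ i : ℕ,
      (∑ k ∈ Finset.range i, L (a (k+1) 0 - a k 0))
        + (∑ j ∈ Finset.range i, L (a i (j+1) - a i j))
      = ∑ k ∈ Finset.range i, L (a (k+1) (k+1) - a k k) := by
    intro i
    induction i with
    | zero => simp
    | succ i ih =>
      rw [Finset.sum_range_succ, Finset.sum_range_succ, Finset.sum_range_succ]
      have hs := hstrip i i
      have key3 : L (a (i+1) i - a i i) + L (a (i+1) (i+1) - a (i+1) i)
          = L (a (i+1) (i+1) - a i i) :=
        L_add (hd i i (i+1) i (by omega) (by omega) (by omega) (by omega))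
          (hd (i+1) i (i+1) (i+1) (by omega) (by omega) (by omega) (by omega))
          (hd i i (i+1) (i+1) (by omega) (by omega) (by omega) (by omega))
      linarith
  have h := hmain n
  have hH : (∑ k ∈ Finset.range n, L (a (k+1) 0 - a k 0)) = 0 := by
    apply Finset.sum_eq_zero
    intro k _
    rw [h0, h0, sub_zero, L_zero]
  have hT : (∑ j ∈ Finset.range n, L (a n (j+1) - a n j)) = 0 := by
    apply Finset.sum_eq_zero
    intro j _
    rw [htop, htop, sub_zero, L_zero]
  have hn0 : (0:ℝ) < (n:ℝ) := by
    have : 0 < n := by omega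
    exact_mod_cast this
  have hD : (∑ k ∈ Finset.range n, L (a (k+1) (k+1) - a k k)) = 2 := by
    have h2n : (0:ℝ) < 2 / n := div_pos (by norm_num) hn0
    have hterm : ∀ k : ℕ, L (a (k+1) (k+1) - a k k) = 2 / n := by
      intro k
      have hco : ((2 / n : ℝ) : AddCircle (2:ℝ)) = a (k+1) (k+1) - a k k := by
        rw [hdiag, hdiag, ← QuotientAddGroup.mk_sub]
        congr 1
        push_cast
        ring
      exact L_eq hco (by linarith) (by rw [div_le_one hn0]; exact_mod_cast hn2)
    rw [Finset.sum_congr rfl fun k _ => hterm k, Finset.sum_const, Finset.card_range,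
      nsmul_eq_mul]
    field_simp
  rw [hH, hT, hD] at h
  norm_num at h

lemma step_bound {n : ℕ} (hn0 : (0:ℝ) < n) {i i' : ℕ} (h1 : i ≤ i') (h2 : i' ≤ i + 1) :
    |2 * (i':ℝ) / n - 2 * (i:ℝ) / n| ≤ 2 / n := by
  have h1' : (i:ℝ) ≤ i' := by exact_mod_cast h1
  have h2' : (i':ℝ) ≤ (i:ℝ) + 1 := by exact_mod_cast h2
  have heq : 2 * (i':ℝ) / n - 2 * (i:ℝ) / n = 2 * ((i':ℝ) - i) / n := by ring
  rw [heq, abs_of_nonneg (div_nonneg (by linarith) hn0.le)]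
  exact (div_le_div_iff_of_pos_right hn0).mpr (by linarith)

end MajTest

/-- Every ternary majority operation on the circle of circumference 2 has jump at
least `2/3`. -/
theorem jump_ge_of_majority_op_on_circle
    (F : AddCircle (2:ℝ) × AddCircle (2:ℝ) × AddCircle (2:ℝ) → AddCircle (2:ℝ))
    (h1 : ∀ x z, F (x, x, z) = x)
    (h2 : ∀ x z, F (x, z, x) = x)
    (h3 : ∀ x z, F (z, x, x) = x) :
    2/3 ≤ jump F := by
  by_contra hlt
  push_neg at hlt
  unfold jump at hlt
  have hjb : ∀ b : AddCircle (2:ℝ) × AddCircle (2:ℝ) × AddCircle (2:ℝ), jumpAt F b < 2/3 := fun b => (le_iSup (jumpAt F) b).trans_lt hlt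
  have hUex : ∀ b : AddCircle (2:ℝ) × AddCircle (2:ℝ) × AddCircle (2:ℝ), ∃ U, IsOpen U ∧ b ∈ U ∧ EMetric.diam (F '' U) < 2/3 := by
    intro b
    have h := hjb b
    unfold jumpAt at h
    rw [iInf_lt_iff] at h; obtain ⟨U, h⟩ := h
    rw [iInf_lt_iff] at h; obtain ⟨hUopen, h⟩ := h
    rw [iInf_lt_iff] at h; obtain ⟨hbU, h⟩ := h
    exact ⟨U, hUopen, hbU, h⟩
  choose U hUo hUm hUd using hUex
  obtain ⟨δ, hδ0, hball⟩ := lebesgue_number_lemma_of_metric (s := (Set.univ : Set (AddCircle (2:ℝ) × AddCircle (2:ℝ) × AddCircle (2:ℝ))))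
    isCompact_univ hUo (fun x _ => Set.mem_iUnion.mpr ⟨x, hUm x⟩)
  have h23 : (2/3 : ℝ≥0∞) = ENNReal.ofReal (2/3) := by
    rw [ENNReal.ofReal_div_of_pos (by norm_num)]
    norm_num
  have key : ∀ P Q : AddCircle (2:ℝ) × AddCircle (2:ℝ) × AddCircle (2:ℝ), dist Q P < δ → ‖F Q - F P‖ < 2/3 := by
    intro P Q hPQ
    obtain ⟨b, hb⟩ := hball P (Set.mem_univ P)
    have hQ : Q ∈ U b := hb (by rwa [Metric.mem_ball])
    have hP : P ∈ U b := hb (Metric.mem_ball_self hδ0)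
    have hle : edist (F Q) (F P) ≤ EMetric.diam (F '' U b) :=
      EMetric.edist_le_diam_of_mem ⟨Q, hQ, rfl⟩ ⟨P, hP, rfl⟩
    have hlt' : edist (F Q) (F P) < ENNReal.ofReal (2/3) := by
      rw [← h23]; exact hle.trans_lt (hUd b)
    rw [edist_lt_ofReal, dist_eq_norm] at hlt'
    exact hlt'
  -- choose n
  obtain ⟨m, hm⟩ := exists_nat_gt (2/δ)
  set n : ℕ := max m 2 with hn
  have hn2 : 2 ≤ n := le_max_right m 2
  have hn0 : (0:ℝ) < n := by
    have : 0 < n := by omega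
    exact_mod_cast this
  have hmn : (2:ℝ)/δ < n := by
    refine hm.trans_le ?_
    exact_mod_cast le_max_left m 2
  have h2nδ : (2:ℝ)/n < δ := by
    rw [div_lt_iff₀ hn0]
    rw [div_lt_iff₀ hδ0] at hmn
    nlinarith
  -- the grid
  set a : ℕ → ℕ → AddCircle (2:ℝ) :=
    fun i j => F (0, ((2 * i / n : ℝ) : AddCircle (2:ℝ)), ((2 * j / n : ℝ) : AddCircle (2:ℝ)))
    with ha
  apply MajTest.core a n hn2
  · -- hd
    intro i j i' j' hii hii' hjj hjj'
    rw [ha]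
    apply key
    have hdist : dist ((0, ((2 * i' / n : ℝ) : AddCircle (2:ℝ)), ((2 * j' / n : ℝ) : AddCircle (2:ℝ))) : AddCircle (2:ℝ) × AddCircle (2:ℝ) × AddCircle (2:ℝ))
        ((0, ((2 * i / n : ℝ) : AddCircle (2:ℝ)), ((2 * j / n : ℝ) : AddCircle (2:ℝ))) : AddCircle (2:ℝ) × AddCircle (2:ℝ) × AddCircle (2:ℝ)) ≤ 2/n := by
      rw [Prod.dist_eq, Prod.dist_eq]
      have hc1 : dist (((2 * i' / n : ℝ)) : AddCircle (2:ℝ)) (((2 * i / n : ℝ)) : AddCircle (2:ℝ)) ≤ 2/n := by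
        rw [dist_eq_norm, ← QuotientAddGroup.mk_sub]
        exact (MajTest.norm_coe_le _).trans (MajTest.step_bound hn0 hii hii')
      have hc2 : dist (((2 * j' / n : ℝ)) : AddCircle (2:ℝ)) (((2 * j / n : ℝ)) : AddCircle (2:ℝ)) ≤ 2/n := by
        rw [dist_eq_norm, ← QuotientAddGroup.mk_sub]
        exact (MajTest.norm_coe_le _).trans (MajTest.step_bound hn0 hjj hjj')
      have hd0 : dist (0 : AddCircle (2:ℝ)) 0 = 0 := dist_self 0
      rw [hd0]
      refine max_le (by positivity) (max_le hc1 hc2)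
    exact hdist.trans_lt h2nδ
  · -- h0 : a k 0 = 0
    intro k
    rw [ha]
    simp only []
    have : ((2 * (0:ℕ) / n : ℝ) : AddCircle (2:ℝ)) = 0 := by norm_num
    rw [this]
    exact h2 0 _
  · -- htop : a n j = 0
    intro j
    rw [ha]
    simp only []
    have h2n : ((2 * (n:ℕ) / n : ℝ) : AddCircle (2:ℝ)) = 0 := by
      have : (2 * (n:ℕ) / n : ℝ) = 2 := by field_simp
      rw [this, AddCircle.coe_eq_zero_iff]
      exact ⟨1, by norm_num⟩
    rw [h2n]
    exact h1 0 _
  · -- hdiag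
    intro k
    rw [ha]
    exact h3 _ 0
end

section
/- Let (A,d) be a compact metric space with more than one element. Then there is no choice of operations G : A⁴ → A, K : A² → A, and ψ_m : A² → A (for m ∈ ℕ) satisfying the equations of Σ₂ — namely G(ψ_{m+k}(x,y), ψ_m(x,y), x, y) = x for all m ∈ ℕ, k ≥ 1, x, y ∈ A, and K(x,y) = G(u,u,x,y) = K(y,x) for all u, x, y ∈ A — such that both χ(G) < diam(A)/2 and χ(K) < diam(A)/2. Equivalently, for every such system of operations, max(χ(G), χ(K)) ≥ diam(A)/2. -/
open scoped ENNReal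

/-!
By compactness the sequence `ψₘ(x, y)` has a cluster point `p`. Every neighbourhood of
`(p, p, x, y)` contains points `(ψ_{m'}(x,y), ψₘ(x,y), x, y)` with `m < m'`, where `G` takes
the value `x`, and `(ψₘ(x,y), ψₘ(x,y), x, y)`, where `G` takes the value `K(x, y)`. Hence
`d(x, K(x,y)) ≤ χ(G)`, and by symmetry of `K` also `d(y, K(x,y)) ≤ χ(G)`, so the triangle
inequality gives `diam A ≤ 2 χ(G)`.
-/

open Filter Topology

section Jump

variable {B A : Type*} [TopologicalSpace B] [PseudoEMetricSpace A]

lemma jumpAt_le_jump (f : B → A) (b : B) : jumpAt f b ≤ jump f :=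
  le_iSup (jumpAt f) b

lemma edist_le_jumpAt {f : B → A} {b : B} {a₁ a₂ : A}
    (h₁ : ∀ U ∈ 𝓝 b, a₁ ∈ f '' U) (h₂ : ∀ U ∈ 𝓝 b, a₂ ∈ f '' U) :
    edist a₁ a₂ ≤ jumpAt f b :=
  le_iInf₂ fun U hU => le_iInf fun hb =>
    Metric.edist_le_ediam_of_mem (h₁ U (hU.mem_nhds hb)) (h₂ U (hU.mem_nhds hb))

end Jump

lemma MapClusterPt.exists_lt_of_mem_nhds {X : Type*} [TopologicalSpace X] {u : ℕ → X} {p : X}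
    (hp : MapClusterPt p atTop u) {s : Set X} (hs : s ∈ 𝓝 p) :
    ∃ m m', m < m' ∧ u m ∈ s ∧ u m' ∈ s := by
  have hfreq : ∃ᶠ m in atTop, u m ∈ s := mapClusterPt_iff_frequently.mp hp s hs
  obtain ⟨m, -, hm⟩ := frequently_atTop.mp hfreq 0
  obtain ⟨m', hmm', hm'⟩ := frequently_atTop.mp hfreq (m + 1)
  exact ⟨m, m', hmm', hm, hm'⟩

lemma edist_le_jump_of_sigma2 {A : Type*} [PseudoEMetricSpace A] [CompactSpace A]
    {G : A × A × A × A → A} {K : A × A → A} {ψ : ℕ → A × A → A}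
    (h1 : ∀ (m k : ℕ), 1 ≤ k → ∀ x y : A, G (ψ (m + k) (x, y), ψ m (x, y), x, y) = x)
    (h2 : ∀ u x y : A, K (x, y) = G (u, u, x, y)) (x y : A) :
    edist x (K (x, y)) ≤ jump G := by
  obtain ⟨p, hp⟩ := exists_clusterPt_of_compactSpace (map (fun m => ψ m (x, y)) atTop)
  let embed : A × A → A × A × A × A := fun a => (a.1, a.2, x, y)
  have hnear : ∀ U ∈ 𝓝 (p, p, x, y), ∃ m m', m < m' ∧
      (ψ m' (x, y), ψ m (x, y), x, y) ∈ U ∧ (ψ m (x, y), ψ m (x, y), x, y) ∈ U := by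
    intro U hU
    have hW : embed ⁻¹' U ∈ 𝓝 p ×ˢ 𝓝 p := by
      rw [← nhds_prod_eq]
      exact (by fun_prop : Continuous embed).continuousAt.preimage_mem_nhds hU
    obtain ⟨s, hs, hss⟩ := mem_prod_self_iff.mp hW
    obtain ⟨m, m', hmm', hm, hm'⟩ := MapClusterPt.exists_lt_of_mem_nhds hp hs
    exact ⟨m, m', hmm', hss (Set.mk_mem_prod hm' hm), hss (Set.mk_mem_prod hm hm)⟩
  refine (edist_le_jumpAt (b := (p, p, x, y)) (fun U hU => ?_) (fun U hU => ?_)).trans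
    (jumpAt_le_jump G _)
  · obtain ⟨m, m', hmm', hU', -⟩ := hnear U hU
    refine ⟨_, hU', ?_⟩
    simpa only [Nat.add_sub_cancel' hmm'.le] using h1 m (m' - m) (by omega) x y
  · obtain ⟨m, -, -, -, hU'⟩ := hnear U hU
    exact ⟨_, hU', (h2 _ x y).symm⟩

lemma ediam_univ_le_mul_two {A : Type*} [PseudoEMetricSpace A] {K : A × A → A} {c : ℝ≥0∞}
    (hK : ∀ x y, edist x (K (x, y)) ≤ c) (hsymm : ∀ x y, K (x, y) = K (y, x)) :
    Metric.ediam (Set.univ : Set A) ≤ c * 2 :=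
  Metric.ediam_le fun x _ y _ =>
    calc edist x y ≤ edist x (K (x, y)) + edist y (K (y, x)) := by
          rw [hsymm y x, edist_comm y]
          exact edist_triangle _ _ _
      _ ≤ c * 2 := by rw [mul_two]; exact add_le_add (hK x y) (hK y x)

theorem jump_ge_half_diam_of_sigma2_general {A : Type*} [MetricSpace A] [CompactSpace A]
    (G : A × A × A × A → A) (K : A × A → A) (ψ : ℕ → A × A → A)
    (h1 : ∀ (m k : ℕ), 1 ≤ k → ∀ x y : A, G (ψ (m + k) (x, y), ψ m (x, y), x, y) = x)
    (h2 : ∀ u x y : A, K (x, y) = G (u, u, x, y))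
    (h3 : ∀ x y : A, K (x, y) = K (y, x)) :
    EMetric.diam (Set.univ : Set A) / 2 ≤ max (jump G) (jump K) :=
  le_max_of_le_left <| ENNReal.div_le_of_le_mul <|
    ediam_univ_le_mul_two (edist_le_jump_of_sigma2 h1 h2) h3

/-- For a compact metric space `A` with more than one element, any operations
`G : A⁴ → A`, `K : A² → A`, `ψₘ : A² → A` satisfying the equations `Σ₂`
(`G(ψ_{m+k}(x,y), ψ_m(x,y), x, y) = x` for `k ≥ 1`, and
`K(x,y) = G(u,u,x,y) = K(y,x)`) must have `max(χ(G), χ(K)) ≥ diam(A)/2`;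
equivalently, one cannot have both `χ(G) < diam(A)/2` and `χ(K) < diam(A)/2`. -/
theorem jump_ge_half_diam_of_sigma2 {A : Type*} [MetricSpace A] [CompactSpace A]
    [Nontrivial A]
    (G : A × A × A × A → A) (K : A × A → A) (ψ : ℕ → A × A → A)
    (h1 : ∀ (m k : ℕ), 1 ≤ k → ∀ x y : A, G (ψ (m + k) (x, y), ψ m (x, y), x, y) = x)
    (h2 : ∀ u x y : A, K (x, y) = G (u, u, x, y))
    (h3 : ∀ x y : A, K (x, y) = K (y, x)) :
    EMetric.diam (Set.univ : Set A) / 2 ≤ max (jump G) (jump K) :=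
  jump_ge_half_diam_of_sigma2_general G K ψ h1 h2 h3
end

section
/- Let I = [0,1] with the Euclidean metric, and let Σ be the equations F₀(G(x₀,x₁)) = x₀ and F₁(G(x₀,x₁)) = x₁. For every ε > 0 there exist a binary operation G : I × I → I and continuous unary operations F₀, F₁ : I → I satisfying Σ on I such that the jump χ(G) ≤ ε (the domain I × I carrying the product topology). Consequently μ(I, Σ) = 0, even though I is not compatible with Σ (no continuous injective binary operation exists on I). -/
open scoped ENNReal

/-!
Let `γ` be a surjective path in `I × I` from `(0, 0)` to `(1, 0)`; such a Peano curve comes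
from the Hausdorff–Alexandroff theorem (the Cantor set maps onto `I × I`) and the Tietze
extension theorem. Traversing, on each `[k/n, (k+1)/n]`, a copy of `γ` squeezed into the
strip `[k/n, (k+1)/n] × I` gives a continuous staircase curve `F = (F₀, F₁) : I → I × I`;
the endpoints of `γ` make the pieces fit. Since `F` maps `[k/n, (k+1)/n]` onto that strip, it
has a section `G` with `|G (x₀, x₁) - x₀| ≤ 1/n`, and a map uniformly `δ`-close to the
continuous projection `(x₀, x₁) ↦ x₀` has jump at most `2δ`.
-/

open Set Int unitInterval

theorem jump_le_two_mul_of_edist_le {B A : Type*} [TopologicalSpace B] [PseudoEMetricSpace A]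
    {f g : B → A} (hg : Continuous g) {δ : ℝ≥0∞} (hfg : ∀ b, edist (f b) (g b) ≤ δ) :
    jump f ≤ 2 * δ := by
  refine iSup_le fun b => ENNReal.le_of_forall_pos_le_add fun η hη _ => ?_
  let U := g ⁻¹' Metric.eball (g b) (η / 2)
  have hU : IsOpen U := Metric.isOpen_eball.preimage hg
  have hbU : b ∈ U := Metric.mem_eball_self (by simpa using hη.ne')
  calc jumpAt f b ≤ Metric.ediam (f '' U) := iInf₂_le_of_le U hU (iInf_le _ hbU)
    _ ≤ 2 * δ + η := by
      refine Metric.ediam_le ?_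
      rintro _ ⟨a, ha, rfl⟩ _ ⟨c, hc, rfl⟩
      have hac : edist (g a) (g c) ≤ η := calc
        edist (g a) (g c) ≤ edist (g a) (g b) + edist (g c) (g b) := edist_triangle_right _ _ _
        _ ≤ η / 2 + η / 2 := add_le_add ha.le hc.le
        _ = η := ENNReal.add_halves _
      calc edist (f a) (f c) ≤ edist (f a) (g a) + edist (g a) (g c) + edist (g c) (f c) :=
            edist_triangle4 _ _ _ _
        _ ≤ δ + η + δ := by gcongr; exacts [hfg a, by rw [edist_comm]; exact hfg c]
        _ = 2 * δ + η := by ring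

theorem exists_continuousMap_unitInterval_surjective (X : Type*) [MetricSpace X] [CompactSpace X]
    [Nonempty X] [TietzeExtension.{0} X] : ∃ f : C(I, X), Function.Surjective f := by
  obtain ⟨s, hs, hsurj⟩ := exists_nat_bool_continuous_surjective_of_compact X
  let c : C(cantorSet, X) :=
    ⟨s ∘ cantorSetHomeomorphNatToBool, hs.comp cantorSetHomeomorphNatToBool.continuous⟩
  have hc : Function.Surjective c := hsurj.comp cantorSetHomeomorphNatToBool.surjective
  obtain ⟨F, hF⟩ := c.exists_extension isClosed_cantorSet.isClosedEmbedding_subtypeVal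
  refine ⟨F.restrict I, fun x => ?_⟩
  obtain ⟨w, rfl⟩ := hc x
  exact ⟨⟨w, cantorSet_subset_unitInterval w.2⟩, congrArg (· w) hF⟩

theorem exists_surjective_path_of_surjective {X : Type*} [TopologicalSpace X]
    [PathConnectedSpace X] {f : C(I, X)} (hf : Function.Surjective f) (a b : X) :
    ∃ γ : Path a b, Function.Surjective γ := by
  let γf : Path (f 0) (f 1) := ⟨f, rfl, rfl⟩
  refine ⟨((PathConnectedSpace.somePath a (f 0)).trans γf).trans
    (PathConnectedSpace.somePath (f 1) b), ?_⟩
  rw [← range_eq_univ, Path.trans_range, Path.trans_range, eq_univ_iff_forall]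
  exact fun x => Or.inl (Or.inr (hf x))

theorem exists_surjective_path_unitInterval_prod :
    ∃ γ : Path ((0, 0) : I × I) (1, 0), Function.Surjective γ := by
  have : PathConnectedSpace I := isPathConnected_iff_pathConnectedSpace.1 <|
    (convex_Icc (0 : ℝ) 1).isPathConnected (nonempty_Icc.2 zero_le_one)
  obtain ⟨f, hf⟩ := exists_continuousMap_unitInterval_surjective (I × I)
  exact exists_surjective_path_of_surjective hf _ _

section Fract

variable {α : Type*} [Ring α] [LinearOrder α] [IsStrictOrderedRing α] [FloorRing α]

theorem comp_fract_intCast_add {β : Type*} {ψ : α → β} (hψ : ψ 0 = ψ 1) (k : ℤ) {u : α}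
    (hu : u ∈ Icc 0 1) : ψ (fract (k + u)) = ψ u := by
  rcases hu.2.lt_or_eq with h | rfl
  · rw [fract_intCast_add, fract_eq_self.2 ⟨hu.1, h⟩]
  · rw [← cast_one, ← cast_add, fract_intCast, hψ, cast_one]

theorem floor_add_comp_fract_intCast_add {φ : α → α} (hφ : φ 1 = φ 0 + 1) (k : ℤ) {u : α}
    (hu : u ∈ Icc 0 1) : ⌊(k : α) + u⌋ + φ (fract (k + u)) = k + φ u := by
  rcases hu.2.lt_or_eq with h | rfl
  · rw [floor_intCast_add, fract_intCast_add, fract_eq_self.2 ⟨hu.1, h⟩,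
      floor_eq_zero_iff.2 ⟨hu.1, h⟩, add_zero]
  · rw [← cast_one, ← cast_add, fract_intCast, floor_intCast, cast_one, hφ, cast_add,
      cast_one, add_comm (φ 0), add_assoc]

variable [TopologicalSpace α] [OrderTopology α]

theorem continuous_floor_add_comp_fract {φ : α → α} (hφc : ContinuousOn φ (Icc 0 1))
    (hφ : φ 1 = φ 0 + 1) : Continuous fun s => ⌊s⌋ + φ (fract s) := by
  have hcont : Continuous ((fun v => -v + φ v) ∘ fract) :=
    (continuousOn_id.neg.add hφc).comp_fract'' (by simp [hφ])
  convert continuous_id.add hcont using 1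
  funext s
  simp only [Function.comp_apply, id, Pi.add_apply]
  rw [← add_assoc, ← sub_eq_add_neg, self_sub_fract]

end Fract

section Staircase

variable (γ : Path ((0, 0) : I × I) (1, 0))

-- `projIcc` only fixes the type: for `t ∈ I` its argument already lies in `[0, 1]`.
noncomputable def staircase (n : ℕ) (t : ℝ) : I × I :=
  (projIcc 0 1 zero_le_one ((⌊n * t⌋ + (γ.extend (fract (n * t))).1) / n),
    (γ.extend (fract (n * t))).2)

theorem continuous_staircase (n : ℕ) : Continuous (staircase γ n) := by
  have hfst : Continuous fun s : ℝ => ⌊s⌋ + ((γ.extend (fract s)).1 : ℝ) :=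
    continuous_floor_add_comp_fract (φ := fun u => ((γ.extend u).1 : ℝ)) (by fun_prop) (by simp)
  have hsnd : Continuous fun s : ℝ => (γ.extend (fract s)).2 :=
    (continuous_snd.comp γ.extend.continuous).continuousOn.comp_fract'' (by simp)
  have hmul : Continuous fun t : ℝ => (n : ℝ) * t := continuous_const_mul _
  exact (continuous_projIcc.comp ((hfst.comp hmul).div_const _)).prodMk (hsnd.comp hmul)

theorem staircase_intCast_add_div {n : ℕ} (hn : 0 < n) (k : ℤ) {u : ℝ} (hu : u ∈ I) :
    staircase γ n ((k + u) / n) =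
      (projIcc 0 1 zero_le_one (((k : ℝ) + (γ.extend u).1) / n), (γ.extend u).2) := by
  have hnt : (n : ℝ) * ((k + u) / n) = k + u := by field_simp
  rw [staircase, hnt, floor_add_comp_fract_intCast_add (φ := fun u => ((γ.extend u).1 : ℝ))
    (by simp) k hu, comp_fract_intCast_add (ψ := fun u => (γ.extend u).2) (by simp) k hu]

theorem exists_nat_lt_le_mul_le_add_one {n : ℕ} (hn : 0 < n) {x : ℝ} (hx : x ∈ I) :
    ∃ k : ℕ, k < n ∧ (k : ℝ) ≤ n * x ∧ n * x ≤ k + 1 := by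
  have hnx : 0 ≤ (n : ℝ) * x := mul_nonneg n.cast_nonneg hx.1
  rcases lt_or_ge ⌊(n : ℝ) * x⌋₊ n with h | h
  · exact ⟨_, h, Nat.floor_le hnx, (Nat.lt_floor_add_one _).le⟩
  · have hn_le : (n : ℝ) ≤ n * x := (Nat.cast_le.2 h).trans (Nat.floor_le hnx)
    have hle_n : (n : ℝ) * x ≤ n := mul_le_of_le_one_right n.cast_nonneg hx.2
    refine ⟨n - 1, by omega, ?_, ?_⟩ <;> rw [Nat.cast_sub hn, Nat.cast_one] <;> linarith

theorem exists_staircase_eq_and_abs_sub_le (hγ : Function.Surjective γ) {n : ℕ} (hn : 0 < n)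
    (p : I × I) : ∃ t ∈ I, staircase γ n t = p ∧ |t - p.1| ≤ 1 / n := by
  obtain ⟨⟨x, hx⟩, y⟩ := p
  obtain ⟨k, hkn, hkx, hxk⟩ := exists_nat_lt_le_mul_le_add_one hn hx
  have hv : n * x - k ∈ I := ⟨by linarith, by linarith⟩
  obtain ⟨⟨u, hu⟩, hγu⟩ := hγ (⟨n * x - k, hv⟩, y)
  have hnR : (0 : ℝ) < n := Nat.cast_pos.2 hn
  have hk_succ : (k : ℝ) + 1 ≤ n := by exact_mod_cast hkn
  have hγu' : γ.extend u = (⟨n * x - k, hv⟩, y) := by rw [γ.extend_apply hu, hγu]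
  refine ⟨(k + u) / n, ⟨div_nonneg (by linarith [hu.1]) hnR.le,
    (div_le_one hnR).2 (by linarith [hu.2])⟩, ?_, ?_⟩
  · have hstair := staircase_intCast_add_div γ hn k hu
    push_cast at hstair
    rw [hstair, hγu']
    have hx' : ((k : ℝ) + (n * x - k)) / n = x := by field_simp; ring
    rw [hx', projIcc_of_mem _ hx]
  · rw [show (k + u) / n - x = (u - (n * x - k)) / n by field_simp; ring, abs_div,
      abs_of_pos hnR]
    gcongr
    exact abs_sub_le_of_nonneg_of_le hu.1 hu.2 hv.1 hv.2

end Staircase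

/-- On `I = [0,1]` with the Euclidean metric: for every `ε > 0` there are operations
`G : I × I → I` and continuous `F₀, F₁ : I → I` with `F₀(G(x₀,x₁)) = x₀` and
`F₁(G(x₀,x₁)) = x₁`, and with `χ(G) ≤ ε`.  Hence `μ(I,Σ) = 0`. -/
theorem exists_injective_binary_ops_small_jump :
    ∀ ε : ℝ, 0 < ε →
      ∃ (G : (Set.Icc (0:ℝ) 1) × (Set.Icc (0:ℝ) 1) → Set.Icc (0:ℝ) 1)
        (F₀ F₁ : (Set.Icc (0:ℝ) 1) → Set.Icc (0:ℝ) 1),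
        Continuous F₀ ∧ Continuous F₁ ∧
        (∀ x₀ x₁, F₀ (G (x₀, x₁)) = x₀) ∧
        (∀ x₀ x₁, F₁ (G (x₀, x₁)) = x₁) ∧
        jump G ≤ ENNReal.ofReal ε := by
  intro ε hε
  obtain ⟨γ, hγ⟩ := exists_surjective_path_unitInterval_prod
  obtain ⟨m, hm⟩ := exists_nat_one_div_lt (half_pos hε)
  choose t ht hFt hdist using exists_staircase_eq_and_abs_sub_le γ hγ m.succ_pos
  let F : I → I × I := fun s => staircase γ (m + 1) s
  have hF : Continuous F := (continuous_staircase γ _).comp continuous_subtype_val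
  refine ⟨fun p => ⟨t p, ht p⟩, fun s => (F s).1, fun s => (F s).2, continuous_fst.comp hF,
    continuous_snd.comp hF, fun x₀ x₁ => congrArg Prod.fst (hFt (x₀, x₁)),
    fun x₀ x₁ => congrArg Prod.snd (hFt (x₀, x₁)), ?_⟩
  calc jump _ ≤ 2 * ENNReal.ofReal (1 / (m + 1 : ℕ)) :=
        jump_le_two_mul_of_edist_le continuous_fst fun p =>
          (edist_le_ofReal (by positivity)).2 (hdist p)
    _ ≤ ENNReal.ofReal ε := by
      rw [← ENNReal.ofReal_ofNat 2, ← ENNReal.ofReal_mul zero_le_two]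
      push_cast
      exact ENNReal.ofReal_le_ofReal (by linarith)
end

section
/- (Approximate Intermediate Value Theorem.) Let S be a convex subset of ℝ, let δ, ε > 0, and let f : S → ℝ satisfy: for all x, x' ∈ S, |x − x'| < δ implies |f(x) − f(x')| < ε. If a, c ∈ S with a ≤ c, and s is a real number lying between f(a) and f(c) (i.e., min(f(a),f(c)) ≤ s ≤ max(f(a),f(c))), then there exists b with a ≤ b ≤ c and |f(b) − s| < ε/2. -/
/-! Subdivide `[a, c]` into steps shorter than `δ`. Along the grid the values of `f` move by less
than `ε` per step and pass from `f a` to `f c`, so some step has its two endpoint values on either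
side of `s`; one of those two values is then within `ε / 2` of `s`. -/

open Set

lemma abs_sub_lt_half_or_abs_sub_lt_half_of_mem_uIcc {u v s ε : ℝ} (huv : |v - u| < ε)
    (hs : s ∈ uIcc u v) : |u - s| < ε / 2 ∨ |v - s| < ε / 2 := by
  rw [abs_lt] at huv
  rcases mem_uIcc.mp hs with ⟨hus, hsv⟩ | ⟨hvs, hsu⟩
  · by_cases h : v - s < ε / 2
    · exact Or.inr (by rw [abs_of_nonneg (by linarith)]; exact h)
    · exact Or.inl (by rw [abs_of_nonpos (by linarith)]; linarith)
  · by_cases h : u - s < ε / 2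
    · exact Or.inl (by rw [abs_of_nonneg (by linarith)]; exact h)
    · exact Or.inr (by rw [abs_of_nonpos (by linarith)]; linarith)

lemma exists_abs_sub_lt_half_of_abs_sub_succ_lt {ε s : ℝ} (hε : 0 < ε) (y : ℕ → ℝ) (n : ℕ)
    (hy : ∀ i < n, |y (i + 1) - y i| < ε) (hs : s ∈ uIcc (y 0) (y n)) :
    ∃ i ≤ n, |y i - s| < ε / 2 := by
  induction n with
  | zero =>
    have h := abs_sub_lt_half_or_abs_sub_lt_half_of_mem_uIcc (by simpa using hε) hs
    exact ⟨0, le_rfl, h.elim id id⟩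
  | succ n ih =>
    rcases uIcc_subset_uIcc_union_uIcc hs with hs | hs
    · obtain ⟨i, hi, hyi⟩ := ih (fun i hi => hy i (by omega)) hs
      exact ⟨i, by omega, hyi⟩
    · rcases abs_sub_lt_half_or_abs_sub_lt_half_of_mem_uIcc (hy n n.lt_succ_self) hs with h | h
      · exact ⟨n, by omega, h⟩
      · exact ⟨n + 1, le_rfl, h⟩

lemma exists_grid_Icc {a c δ : ℝ} (hδ : 0 < δ) (hac : a ≤ c) :
    ∃ (n : ℕ) (x : ℕ → ℝ), x 0 = a ∧ x n = c ∧ (∀ i ≤ n, x i ∈ Icc a c) ∧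
      ∀ i < n, |x (i + 1) - x i| < δ := by
  obtain ⟨n, hn⟩ := exists_nat_gt ((c - a) / δ)
  have hn0 : (0 : ℝ) < n := (div_nonneg (sub_nonneg.mpr hac) hδ.le).trans_lt hn
  set h := (c - a) / n with h_def
  have hh : 0 ≤ h := div_nonneg (sub_nonneg.mpr hac) hn0.le
  have hnh : n * h = c - a := by rw [h_def]; field_simp
  refine ⟨n, fun i => a + i * h, by simp, by simp [hnh], fun i hi => ⟨?_, ?_⟩, fun i _ => ?_⟩
  · linarith [mul_nonneg (Nat.cast_nonneg (α := ℝ) i) hh]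
  · have : (i : ℝ) * h ≤ n * h := mul_le_mul_of_nonneg_right (by exact_mod_cast hi) hh
    linarith
  · rw [show a + ((i + 1 : ℕ) : ℝ) * h - (a + i * h) = h by push_cast; ring, abs_of_nonneg hh,
      h_def, div_lt_iff₀ hn0]
    rwa [div_lt_iff₀ hδ, mul_comm] at hn

/-- Approximate Intermediate Value Theorem: if `f` is `(δ,ε)`-constrained on a convex
`S ⊆ ℝ`, `a ≤ c` in `S`, and `s` lies between `f(a)` and `f(c)`, then some `b ∈ [a,c]`
has `|f(b) − s| < ε/2`. -/
theorem approx_intermediate_value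
    (S : Set ℝ) (hS : Convex ℝ S)
    (δ ε : ℝ) (hδ : 0 < δ) (hε : 0 < ε)
    (f : ℝ → ℝ)
    (hf : ∀ x ∈ S, ∀ x' ∈ S, |x - x'| < δ → |f x - f x'| < ε)
    (a c : S) (hac : (a : ℝ) ≤ c)
    (s : ℝ) (hs1 : min (f a) (f c) ≤ s) (hs2 : s ≤ max (f a) (f c)) :
    ∃ b ∈ Set.Icc (a : ℝ) (c : ℝ), |f b - s| < ε / 2 := by
  obtain ⟨n, x, hx0, hxn, hxIcc, hstep⟩ := exists_grid_Icc hδ hac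
  have hxS : ∀ i ≤ n, x i ∈ S := fun i hi => hS.ordConnected.out a.2 c.2 (hxIcc i hi)
  have hs : s ∈ uIcc (f (x 0)) (f (x n)) := by rw [hx0, hxn]; exact ⟨hs1, hs2⟩
  obtain ⟨i, hi, hfi⟩ := exists_abs_sub_lt_half_of_abs_sub_succ_lt hε (f ∘ x) n
    (fun i hi => hf _ (hxS _ hi) _ (hxS _ hi.le) (hstep i hi)) hs
  exact ⟨x i, hxIcc i hi, hfi⟩
end
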